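/- arXiv:math/0608622 — 2 statements merged into one kernel-verified Lean document; each statement's English description precedes it below -/
import Mathlib

section
/- Let n be a positive integer and let π ∈ NC(n). The total number of partitions ρ ∈ NC(n) such that ρ ≫ π equals 2^{|π| − |π|_out}. -/
open Finset

attribute [local instance] Classical.propDecidable

open scoped ComplexOrder

namespace BBP

/-- Partitions of `{1,…,m}` modeled as `Finpartition`s of `univ : Finset (Fin m)`. -/
abbrev FP (m : ℕ) := Finpartition (Finset.univ : Finset (Fin m))

noncomputable instance (m : ℕ) : Fintype (FP m) :=
  Fintype.ofInjective (fun π : FP m => π.parts) fun a b h => by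
    cases a; cases b; simpa using h

/-- `x` is the minimum of the set `C`. -/
def IsMinOf {m : ℕ} (x : Fin m) (C : Finset (Fin m)) : Prop :=
  x ∈ C ∧ ∀ y ∈ C, x ≤ y

/-- `x` is the maximum of the set `C`. -/
def IsMaxOf {m : ℕ} (x : Fin m) (C : Finset (Fin m)) : Prop :=
  x ∈ C ∧ ∀ y ∈ C, y ≤ x

/-- `a` and `b` lie in one block of `π`. -/
def SameBlock {m : ℕ} (π : FP m) (a b : Fin m) : Prop :=
  ∃ B ∈ π.parts, a ∈ B ∧ b ∈ B

/-- `π` is non-crossing: if `i<j<k<l`, `i,k` in one block and `j,l` in one block,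
then all of them are in one block. -/
def IsNC {m : ℕ} (π : FP m) : Prop :=
  ∀ i j k l : Fin m, i < j → j < k → k < l →
    SameBlock π i k → SameBlock π j l → SameBlock π i j

/-- `A` embraces `B` : `min A ≤ min B` and `max B ≤ max A`. -/
def Embraces {m : ℕ} (A B : Finset (Fin m)) : Prop :=
  ∃ a₁ a₂ b₁ b₂ : Fin m, IsMinOf a₁ A ∧ IsMaxOf a₂ A ∧ IsMinOf b₁ B ∧ IsMaxOf b₂ B ∧
    a₁ ≤ b₁ ∧ b₂ ≤ a₂

/-- `B` strictly embraces `A` : `min B < min A` and `max A < max B`. -/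
def StrictlyEmbraces {m : ℕ} (B A : Finset (Fin m)) : Prop :=
  ∃ b₁ b₂ a₁ a₂ : Fin m, IsMinOf b₁ B ∧ IsMaxOf b₂ B ∧ IsMinOf a₁ A ∧ IsMaxOf a₂ A ∧
    b₁ < a₁ ∧ a₂ < b₂

/-- `A` is an outer block of `π`. -/
def IsOuter {m : ℕ} (π : FP m) (A : Finset (Fin m)) : Prop :=
  A ∈ π.parts ∧ ¬ ∃ B ∈ π.parts, StrictlyEmbraces B A

/-- The number `|π|_out` of outer blocks of `π`. -/
noncomputable def numOuter {m : ℕ} (π : FP m) : ℕ :=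
  (π.parts.filter fun A => IsOuter π A).card

/-- Reversed refinement order: every block of `ρ` is a union of blocks of `π`. -/
def Refines {m : ℕ} (π ρ : FP m) : Prop :=
  ∀ B ∈ π.parts, ∃ C ∈ ρ.parts, B ⊆ C

/-- The partial order `π ≪ ρ`. -/
def Ll {m : ℕ} (π ρ : FP m) : Prop :=
  Refines π ρ ∧
    ∀ C ∈ ρ.parts, ∃ B ∈ π.parts, ∃ x y : Fin m,
      IsMinOf x C ∧ IsMaxOf y C ∧ x ∈ B ∧ y ∈ B

/-- The partition `1ₙ` of `{1,…,n+1}` with a single block. -/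
noncomputable def fullPart (n : ℕ) : FP (n+1) :=
  Finpartition.indiscrete (by simpa using (Finset.univ_nonempty (α := Fin (n+1))).ne_empty)

/-- `π` is an interval partition. -/
def IsIntervalPartition {m : ℕ} (π : FP m) : Prop :=
  ∀ B ∈ π.parts, ∀ x ∈ B, ∀ z ∈ B, ∀ y : Fin m, x ≤ y → y ≤ z → y ∈ B

/-- `σ` is the permutation associated to `π` : on each block `{b₁ < ⋯ < b_q}` it is the
cycle `b₁ ↦ b₂ ↦ ⋯ ↦ b_q ↦ b₁`. -/
def IsAssocPerm {m : ℕ} (π : FP m) (σ : Equiv.Perm (Fin m)) : Prop :=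
  ∀ B ∈ π.parts, ∀ b ∈ B, σ b ∈ B ∧
    ((b < σ b ∧ ∀ x ∈ B, b < x → σ b ≤ x) ∨ (IsMaxOf b B ∧ IsMinOf (σ b) B))

/-- `κ` is the Kreweras complement of `π`, characterized by `P_κ = P_π⁻¹ ∘ P_{1ₙ}`,
where `P_{1ₙ}` is the cycle `1 ↦ 2 ↦ ⋯ ↦ n ↦ 1` (i.e. `finRotate`). -/
def IsKrewerasPair {m : ℕ} (π κ : FP m) : Prop :=
  ∃ σπ σκ : Equiv.Perm (Fin m), IsAssocPerm π σπ ∧ IsAssocPerm κ σκ ∧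
    σκ = σπ⁻¹ * finRotate m

/-- the element `2a-1` of `{1,…,2n}`, in `Fin (2n)` (0-indexed). -/
def oddEmb {n : ℕ} (a : Fin n) : Fin (2*n) := ⟨2*a.val, by have := a.isLt; omega⟩

/-- the element `2a` of `{1,…,2n}`, in `Fin (2n)` (0-indexed). -/
def evenEmb {n : ℕ} (a : Fin n) : Fin (2*n) := ⟨2*a.val + 1, by have := a.isLt; omega⟩

/-- `θ = π^(odd) ∪ ρ^(even)` : the blocks of `θ` are the sets `{2a-1 : a ∈ A}` for `A`
a block of `π` and the sets `{2b : b ∈ B}` for `B` a block of `ρ`. -/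
def IsOddEvenJoin {n : ℕ} (π ρ : FP n) (θ : FP (2*n)) : Prop :=
  θ.parts = π.parts.image (fun B => B.image oddEmb) ∪
    ρ.parts.image (fun B => B.image evenEmb)

/-- a block consisting of odd elements of `{1,…,2n}` (even 0-indexed values). -/
def OddBlock {m : ℕ} (B : Finset (Fin m)) : Prop := ∀ x ∈ B, x.val % 2 = 0

/-- a block consisting of even elements of `{1,…,2n}` (odd 0-indexed values). -/
def EvenBlock {m : ℕ} (B : Finset (Fin m)) : Prop := ∀ x ∈ B, x.val % 2 = 1

/-- every block of `θ` is contained in the odds or in the evens. -/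
def ParityPreserving {m : ℕ} (θ : FP m) : Prop :=
  ∀ B ∈ θ.parts, OddBlock B ∨ EvenBlock B

def OppositeParity {m : ℕ} (A B : Finset (Fin m)) : Prop :=
  (OddBlock A ∧ EvenBlock B) ∨ (EvenBlock A ∧ OddBlock B)

def SameParity {m : ℕ} (A B : Finset (Fin m)) : Prop :=
  (OddBlock A ∧ OddBlock B) ∨ (EvenBlock A ∧ EvenBlock B)

/-- `P = Parent_θ(A)` : the unique block `P ≠ A` of `θ` embracing `A` such that every
block `A' ≠ A` of `θ` embracing `A` also embraces `P`. -/
def IsParent {m : ℕ} (θ : FP m) (A P : Finset (Fin m)) : Prop :=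
  P ∈ θ.parts ∧ P ≠ A ∧ Embraces P A ∧
    ∀ A' ∈ θ.parts, A' ≠ A → Embraces A' A → Embraces A' P

/-- `θ` has exactly two outer blocks. -/
def ExactlyTwoOuterBlocks {m : ℕ} (θ : FP m) : Prop :=
  ∃ M ∈ θ.parts, ∃ N ∈ θ.parts, M ≠ N ∧ IsOuter θ M ∧ IsOuter θ N ∧
    ∀ A ∈ θ.parts, IsOuter θ A → A = M ∨ A = N

/-- A series in `ℂ₀⟨⟨z₁,…,z_k⟩⟩`, given by its family of coefficients: `f n w` is the
coefficient of `z_{w 0} z_{w 1} ⋯ z_{w n}` (a word of length `n+1 ≥ 1`). -/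
abbrev NCSeries (k : ℕ) := (n : ℕ) → (Fin (n+1) → Fin k) → ℂ

/-- The coefficient `Cf_{w|B}(f)` of the restriction of the word `w` to the set `B`,
listing the elements of `B` in increasing order.  (Equals `1` for `B = ∅`.) -/
noncomputable def partCoeff {k m : ℕ} (f : NCSeries k) (w : Fin (m+1) → Fin k)
    (B : Finset (Fin (m+1))) : ℂ :=
  if h : B.Nonempty then
    f (B.card - 1) (fun j =>
      w ((B.orderIsoOfFin (Nat.succ_pred_eq_of_pos (Finset.card_pos.mpr h)).symm j).1))
  else 1

/-- The generalized coefficient `Cf_{w;π}(f) = ∏_{B block of π} Cf_{w|B}(f)`. -/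
noncomputable def genCoeff {k m : ℕ} (f : NCSeries k) (w : Fin (m+1) → Fin k)
    (π : FP (m+1)) : ℂ :=
  ∏ B ∈ π.parts, partCoeff f w B

/-- Linear functionals on `ℂ⟨X₁,…,X_k⟩`. -/
abbrev Dist (k : ℕ) := FreeAlgebra ℂ (Fin k) →ₗ[ℂ] ℂ

/-- `μ ∈ D_alg(k)` : `μ` is normalized by `μ(1) = 1`. -/
def IsDalg {k : ℕ} (μ : Dist k) : Prop := μ 1 = 1

/-- The moment series `M_μ`, with `(momentSeries μ) n w = μ (X_{w 0} ⋯ X_{w n})`. -/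
noncomputable def momentSeries {k : ℕ} (μ : Dist k) : NCSeries k :=
  fun _ w => μ ((List.ofFn fun j => FreeAlgebra.ι ℂ (w j)).prod)

/-- `f = R_μ` : the moments of `μ` are obtained from `f` by summation over all
non-crossing partitions. -/
def IsRTransform {k : ℕ} (μ : Dist k) (f : NCSeries k) : Prop :=
  ∀ (n : ℕ) (w : Fin (n+1) → Fin k),
    momentSeries μ n w = ∑ π : FP (n+1), if IsNC π then genCoeff f w π else 0

/-- `g = η_μ` : the moments of `μ` are obtained from `g` by summation over all
interval partitions. -/
def IsEtaSeries {k : ℕ} (μ : Dist k) (g : NCSeries k) : Prop :=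
  ∀ (n : ℕ) (w : Fin (n+1) → Fin k),
    momentSeries μ n w = ∑ π : FP (n+1), if IsIntervalPartition π then genCoeff g w π else 0

/-- `μ ∈ D_c(k)` : `μ` is the joint distribution of a `k`-tuple of selfadjoint elements
with respect to a state on a unital C*-algebra. -/
def IsDc {k : ℕ} (μ : Dist k) : Prop :=
  IsDalg μ ∧
  ∃ (A : Type) (_ : NormedRing A) (_ : StarRing A) (_ : CStarRing A)
    (_ : NormedAlgebra ℂ A) (_ : StarModule ℂ A) (_ : CompleteSpace A)
    (φ : A →ₗ[ℂ] ℂ) (x : Fin k → A),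
      φ 1 = 1 ∧ (∀ a : A, 0 ≤ φ (star a * a)) ∧ (∀ i, IsSelfAdjoint (x i)) ∧
      ∀ (n : ℕ) (w : Fin (n+1) → Fin k),
        momentSeries μ n w = φ ((List.ofFn fun j => x (w j)).prod)

/-- convergence in moments. -/
def ConvInMoments {k : ℕ} (μseq : ℕ → Dist k) (μ : Dist k) : Prop :=
  ∀ P : FreeAlgebra ℂ (Fin k),
    Filter.Tendsto (fun N => μseq N P) Filter.atTop (nhds (μ P))

/-- coefficientwise convergence of series. -/
def ConvCoeffwise {k : ℕ} (fseq : ℕ → NCSeries k) (f : NCSeries k) : Prop :=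
  ∀ (n : ℕ) (w : Fin (n+1) → Fin k),
    Filter.Tendsto (fun N => fseq N n w) Filter.atTop (nhds (f n w))

/-- `ν` is the `p`-fold free additive convolution `μ ⊞ ⋯ ⊞ μ`, i.e. `R_ν = p · R_μ`. -/
def IsNFoldFree {k : ℕ} (p : ℕ) (μ ν : Dist k) : Prop :=
  ∃ f : NCSeries k, IsRTransform μ f ∧ IsRTransform ν (fun n w => (p : ℂ) * f n w)

/-- `ν` is the `p`-fold Boolean convolution `μ ⊎ ⋯ ⊎ μ`, i.e. `η_ν = p · η_μ`. -/
def IsNFoldBool {k : ℕ} (p : ℕ) (μ ν : Dist k) : Prop :=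
  ∃ g : NCSeries k, IsEtaSeries μ g ∧ IsEtaSeries ν (fun n w => (p : ℂ) * g n w)

/-- `ν = 𝔹(μ)` : the Boolean Bercovici–Pata bijection, `R_{𝔹(μ)} = η_μ`. -/
def IsBP {k : ℕ} (μ ν : Dist k) : Prop :=
  ∃ f : NCSeries k, IsEtaSeries μ f ∧ IsRTransform ν f

/-- `μ ∈ D_c(k)` is infinitely divisible with respect to `⊞`. -/
def IsInfDiv {k : ℕ} (μ : Dist k) : Prop :=
  IsDc μ ∧ ∀ N : ℕ, 0 < N → ∃ ν : Dist k, IsDc ν ∧ IsNFoldFree N ν μ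

/-- `g = Reta(f)`, i.e. there is `μ ∈ D_alg(k)` with `f = R_μ` and `g = η_μ`. -/
def RetaRel {k : ℕ} (f g : NCSeries k) : Prop :=
  ∃ μ : Dist k, IsDalg μ ∧ IsRTransform μ f ∧ IsEtaSeries μ g

/-
A block of `π` is inner when another block strictly embraces it. Since `π` is non-crossing, the
blocks embracing a block `A` are nested, and the innermost one is the parent of `A`.

A partition `ρ ∈ NC(n)` with `π ≪ ρ` is determined by the set of inner blocks of `π` that `ρ`
joins to their parent: each block `C` of `ρ` contains a root block of `π` holding `min C` and
`max C`, every other block of `π` inside `C` is strictly embraced by the root, and non-crossingness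
of `ρ` forces its parent into `C` as well; following parents from any block of `π` inside `C`
thus leads to the root. Conversely, for any set `S` of inner blocks, merging every block of `S`
into its parent gives such a `ρ`. Each block of the merged partition is spanned by the top block
reached along the parent chains; if two top blocks interleaved, the chains started inside the span
of one of them would stay inside it, so each top block would lie within the span of the other.
Hence these `ρ` correspond to the subsets of the `|π| - |π|_out` inner blocks.
-/

theorem isFixedPt_iterate_of_lt {α : Type*} {f : α → α} (μ : α → ℕ)
    (hμ : ∀ a, f a ≠ a → μ (f a) < μ a) {n : ℕ} {a : α} (ha : μ a < n) :
    Function.IsFixedPt f (f^[n] a) := by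
  induction n generalizing a with
  | zero => omega
  | succ n ih =>
    rw [Function.iterate_succ_apply]
    by_cases hfa : f a = a
    · rw [hfa, Function.iterate_fixed hfa]
      exact hfa
    · exact ih (by have := hμ a hfa; omega)

variable {m : ℕ}

section Extremes

-- The extreme elements of a block as natural numbers, so that `omega` can chain inequalities
-- between them; the value `0` at `∅` is junk.
def lo (B : Finset (Fin m)) : ℕ := if h : B.Nonempty then B.min' h else 0

def hi (B : Finset (Fin m)) : ℕ := if h : B.Nonempty then B.max' h else 0

variable {A B : Finset (Fin m)} {x : Fin m}

lemma lo_le (hx : x ∈ B) : lo B ≤ x := by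
  rw [lo, dif_pos ⟨x, hx⟩]
  exact B.min'_le x hx

lemma le_hi (hx : x ∈ B) : (x : ℕ) ≤ hi B := by
  rw [hi, dif_pos ⟨x, hx⟩]
  exact B.le_max' x hx

lemma exists_val_eq_lo (hB : B.Nonempty) : ∃ x ∈ B, (x : ℕ) = lo B :=
  ⟨B.min' hB, B.min'_mem hB, by rw [lo, dif_pos hB]⟩

lemma exists_val_eq_hi (hB : B.Nonempty) : ∃ x ∈ B, (x : ℕ) = hi B :=
  ⟨B.max' hB, B.max'_mem hB, by rw [hi, dif_pos hB]⟩

lemma IsMinOf.val_eq_lo (h : IsMinOf x B) : (x : ℕ) = lo B := by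
  obtain ⟨y, hy, hyB⟩ := exists_val_eq_lo ⟨x, h.1⟩
  have := h.2 y hy
  have := lo_le h.1
  omega

lemma IsMaxOf.val_eq_hi (h : IsMaxOf x B) : (x : ℕ) = hi B := by
  obtain ⟨y, hy, hyB⟩ := exists_val_eq_hi ⟨x, h.1⟩
  have := h.2 y hy
  have := le_hi h.1
  omega

lemma StrictlyEmbraces.lt (h : StrictlyEmbraces B A) : lo B < lo A ∧ hi A < hi B := by
  obtain ⟨b₁, b₂, a₁, a₂, hb₁, hb₂, ha₁, ha₂, h₁, h₂⟩ := h
  rw [← hb₁.val_eq_lo, ← hb₂.val_eq_hi, ← ha₁.val_eq_lo, ← ha₂.val_eq_hi]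
  exact ⟨h₁, h₂⟩

lemma strictlyEmbraces_iff (hB : B.Nonempty) (hA : A.Nonempty) :
    StrictlyEmbraces B A ↔ lo B < lo A ∧ hi A < hi B := by
  refine ⟨StrictlyEmbraces.lt, fun h => ?_⟩
  obtain ⟨b₁, hb₁, hb₁B⟩ := exists_val_eq_lo hB
  obtain ⟨b₂, hb₂, hb₂B⟩ := exists_val_eq_hi hB
  obtain ⟨a₁, ha₁, ha₁A⟩ := exists_val_eq_lo hA
  obtain ⟨a₂, ha₂, ha₂A⟩ := exists_val_eq_hi hA
  refine ⟨b₁, b₂, a₁, a₂, ⟨hb₁, fun y hy => ?_⟩, ⟨hb₂, fun y hy => ?_⟩, ⟨ha₁, fun y hy => ?_⟩,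
    ⟨ha₂, fun y hy => ?_⟩, by omega, by omega⟩
  · have := lo_le hy; omega
  · have := le_hi hy; omega
  · have := lo_le hy; omega
  · have := le_hi hy; omega

end Extremes

section Blocks

variable {π ρ : FP m} {A B T : Finset (Fin m)}

lemma part_mem_parts (π : FP m) (x : Fin m) : π.part x ∈ π.parts :=
  π.part_mem.2 (mem_univ x)

lemma mem_part_self (π : FP m) (x : Fin m) : x ∈ π.part x :=
  π.mem_part (mem_univ x)

lemma sameBlock_iff_mem_part {a b : Fin m} : SameBlock π a b ↔ b ∈ π.part a := by
  rw [Finpartition.mem_part_iff_exists]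
  exact exists_congr fun B => by tauto

lemma parts_eq_image_part (π : FP m) : π.parts = univ.image π.part := by
  ext B
  rw [mem_image]
  constructor
  · intro hB
    obtain ⟨b, hb⟩ := π.nonempty_of_mem_parts hB
    exact ⟨b, mem_univ b, π.part_eq_of_mem hB hb⟩
  · rintro ⟨b, -, rfl⟩
    exact part_mem_parts π b

lemma eq_of_mem_part_iff (h : ∀ a b, b ∈ π.part a ↔ b ∈ ρ.part a) : π = ρ := by
  have hpart : π.part = ρ.part := funext fun a => Finset.ext (h a)
  exact Finpartition.ext (by rw [parts_eq_image_part π, parts_eq_image_part ρ, hpart])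

lemma lo_lt (hB : B ∈ π.parts) : lo B < m := by
  obtain ⟨x, -, hx⟩ := exists_val_eq_lo (π.nonempty_of_mem_parts hB)
  omega

lemma eq_of_lo_eq (hA : A ∈ π.parts) (hB : B ∈ π.parts) (h : lo A = lo B) : A = B := by
  obtain ⟨a, ha, haA⟩ := exists_val_eq_lo (π.nonempty_of_mem_parts hA)
  obtain ⟨b, hb, hbB⟩ := exists_val_eq_lo (π.nonempty_of_mem_parts hB)
  obtain rfl : a = b := Fin.ext (by omega)
  exact π.eq_of_mem_parts hA hB ha hb

lemma eq_of_hi_eq (hA : A ∈ π.parts) (hB : B ∈ π.parts) (h : hi A = hi B) : A = B := by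
  obtain ⟨a, ha, haA⟩ := exists_val_eq_hi (π.nonempty_of_mem_parts hA)
  obtain ⟨b, hb, hbB⟩ := exists_val_eq_hi (π.nonempty_of_mem_parts hB)
  obtain rfl : a = b := Fin.ext (by omega)
  exact π.eq_of_mem_parts hA hB ha hb

lemma strictlyEmbraces_of_le (hT : T ∈ π.parts) (hA : A ∈ π.parts) (hne : A ≠ T)
    (h : lo T ≤ lo A ∧ hi A ≤ hi T) : StrictlyEmbraces T A := by
  have h₁ : lo T ≠ lo A := fun e => hne (eq_of_lo_eq hT hA e).symm
  have h₂ : hi T ≠ hi A := fun e => hne (eq_of_hi_eq hT hA e).symm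
  exact (strictlyEmbraces_iff (π.nonempty_of_mem_parts hT) (π.nonempty_of_mem_parts hA)).2
    (by omega)

lemma IsNC.eq_of_lt (hπ : IsNC π) (hA : A ∈ π.parts) (hB : B ∈ π.parts) {a b c d : Fin m}
    (ha : a ∈ A) (hc : c ∈ A) (hb : b ∈ B) (hd : d ∈ B) (hab : a < b) (hbc : b < c)
    (hcd : c < d) : A = B := by
  obtain ⟨D, hD, haD, hbD⟩ := hπ a b c d hab hbc hcd ⟨A, hA, ha, hc⟩ ⟨B, hB, hb, hd⟩
  exact (π.eq_of_mem_parts hD hA haD ha).symm.trans (π.eq_of_mem_parts hD hB hbD hb)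

lemma IsNC.strictlyEmbraces_of_mem (hπ : IsNC π) (hA : A ∈ π.parts) (hT : T ∈ π.parts)
    (hne : A ≠ T) {x : Fin m} (hx : x ∈ A) (h₁ : lo T < x) (h₂ : x < hi T) :
    StrictlyEmbraces T A := by
  obtain ⟨t₁, ht₁, ht₁T⟩ := exists_val_eq_lo (π.nonempty_of_mem_parts hT)
  obtain ⟨t₂, ht₂, ht₂T⟩ := exists_val_eq_hi (π.nonempty_of_mem_parts hT)
  obtain ⟨a₁, ha₁, ha₁A⟩ := exists_val_eq_lo (π.nonempty_of_mem_parts hA)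
  obtain ⟨a₂, ha₂, ha₂A⟩ := exists_val_eq_hi (π.nonempty_of_mem_parts hA)
  have hlo : lo A ≠ lo T := fun e => hne (eq_of_lo_eq hA hT e)
  have hhi : hi A ≠ hi T := fun e => hne (eq_of_hi_eq hA hT e)
  refine (strictlyEmbraces_iff (π.nonempty_of_mem_parts hT) (π.nonempty_of_mem_parts hA)).2
    ⟨?_, ?_⟩
  · by_contra
    exact hne (hπ.eq_of_lt hA hT ha₁ hx ht₁ ht₂ (by omega) (by omega) (by omega))
  · by_contra
    exact hne (hπ.eq_of_lt hT hA ht₁ ht₂ hx ha₂ (by omega) (by omega) (by omega)).symm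

end Blocks

section Parent

variable {π : FP m} {A Q : Finset (Fin m)}

noncomputable def embracers (π : FP m) (A : Finset (Fin m)) : Finset (Finset (Fin m)) :=
  π.parts.filter fun B => StrictlyEmbraces B A

lemma mem_embracers : Q ∈ embracers π A ↔ Q ∈ π.parts ∧ StrictlyEmbraces Q A :=
  mem_filter

noncomputable def innerBlocks (π : FP m) : Finset (Finset (Fin m)) :=
  π.parts.filter fun A => ¬ IsOuter π A

lemma mem_innerBlocks : A ∈ innerBlocks π ↔ A ∈ π.parts ∧ (embracers π A).Nonempty := by
  rw [innerBlocks, Finset.mem_filter]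
  simp only [IsOuter, Finset.Nonempty, mem_embracers, not_and, not_not]
  tauto

lemma card_innerBlocks (π : FP m) : (innerBlocks π).card = π.parts.card - numOuter π := by
  have := card_filter_add_card_filter_not (s := π.parts) (p := fun A => IsOuter π A)
  unfold innerBlocks numOuter
  omega

-- When `π` is non-crossing the embracers of `A` are nested, so this is the innermost one.
noncomputable def parent (π : FP m) (A : Finset (Fin m)) : Finset (Fin m) :=
  if h : (embracers π A).Nonempty then ((embracers π A).exists_max_image lo h).choose else A

lemma parent_mem_embracers (h : (embracers π A).Nonempty) : parent π A ∈ embracers π A := by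
  rw [parent, dif_pos h]
  exact ((embracers π A).exists_max_image lo h).choose_spec.1

lemma lo_le_lo_parent (hQ : Q ∈ embracers π A) : lo Q ≤ lo (parent π A) := by
  rw [parent, dif_pos ⟨Q, hQ⟩]
  exact ((embracers π A).exists_max_image lo ⟨Q, hQ⟩).choose_spec.2 Q hQ

lemma parent_mem_parts (hA : A ∈ π.parts) : parent π A ∈ π.parts := by
  by_cases h : (embracers π A).Nonempty
  · exact (mem_embracers.1 (parent_mem_embracers h)).1
  · rwa [parent, dif_neg h]

lemma strictlyEmbraces_parent (hA : A ∈ innerBlocks π) : StrictlyEmbraces (parent π A) A :=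
  (mem_embracers.1 (parent_mem_embracers (mem_innerBlocks.1 hA).2)).2

lemma parent_lt_of_ne (h : parent π A ≠ A) : lo (parent π A) < lo A ∧ hi A < hi (parent π A) := by
  by_cases hA : (embracers π A).Nonempty
  · exact (mem_embracers.1 (parent_mem_embracers hA)).2.lt
  · exact absurd (dif_neg hA) h

lemma IsNC.hi_parent_le (hπ : IsNC π) (hA : A.Nonempty) (hQ : Q ∈ embracers π A) :
    hi (parent π A) ≤ hi Q := by
  have hP := parent_mem_embracers ⟨Q, hQ⟩
  obtain ⟨hPparts, hPA⟩ := mem_embracers.1 hP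
  obtain ⟨hQparts, hQA⟩ := mem_embracers.1 hQ
  have hlo := lo_le_lo_parent hQ
  by_cases hPQ : parent π A = Q
  · rw [hPQ]
  obtain ⟨p, hp, hpP⟩ := exists_val_eq_lo (π.nonempty_of_mem_parts hPparts)
  obtain ⟨a, ha⟩ := hA
  have := lo_le ha
  have := le_hi ha
  have hne : lo Q ≠ lo (parent π A) := fun e => hPQ (eq_of_lo_eq hQparts hPparts e).symm
  have := hPA.lt
  have := hQA.lt
  exact (hπ.strictlyEmbraces_of_mem hPparts hQparts hPQ hp (by omega) (by omega)).lt.2.le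

end Parent

section Merging

variable {π : FP m} {S : Finset (Finset (Fin m))} {B T : Finset (Fin m)}

noncomputable def mergeStep (π : FP m) (S : Finset (Finset (Fin m))) (B : Finset (Fin m)) :
    Finset (Fin m) :=
  if B ∈ S then parent π B else B

-- Every proper step lowers `lo`, so `m` steps reach a fixed point of `mergeStep π S`.
noncomputable def topBlock (π : FP m) (S : Finset (Finset (Fin m))) (B : Finset (Fin m)) :
    Finset (Fin m) :=
  (mergeStep π S)^[m] B

lemma mergeStep_mem_parts (hB : B ∈ π.parts) : mergeStep π S B ∈ π.parts := by
  unfold mergeStep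
  split_ifs
  exacts [parent_mem_parts hB, hB]

lemma mergeStep_lt_of_ne (h : mergeStep π S B ≠ B) :
    lo (mergeStep π S B) < lo B ∧ hi B < hi (mergeStep π S B) := by
  unfold mergeStep at h ⊢
  split_ifs at h ⊢
  exacts [parent_lt_of_ne h, absurd rfl h]

lemma mergeStep_le (π : FP m) (S : Finset (Finset (Fin m))) (B : Finset (Fin m)) :
    lo (mergeStep π S B) ≤ lo B ∧ hi B ≤ hi (mergeStep π S B) := by
  by_cases h : mergeStep π S B = B
  · rw [h]
    exact ⟨le_rfl, le_rfl⟩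
  · have := mergeStep_lt_of_ne h
    omega

lemma topBlock_mem_parts (hB : B ∈ π.parts) : topBlock π S B ∈ π.parts :=
  Function.Iterate.rec (· ∈ π.parts) hB (fun _ => mergeStep_mem_parts) m

lemma topBlock_le (π : FP m) (S : Finset (Finset (Fin m))) (B : Finset (Fin m)) :
    lo (topBlock π S B) ≤ lo B ∧ hi B ≤ hi (topBlock π S B) :=
  Function.Iterate.rec (fun X => lo X ≤ lo B ∧ hi B ≤ hi X) ⟨le_rfl, le_rfl⟩
    (fun X hX => by have := mergeStep_le π S X; omega) m

lemma topBlock_part_le (π : FP m) (S : Finset (Finset (Fin m))) (x : Fin m) :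
    lo (topBlock π S (π.part x)) ≤ x ∧ (x : ℕ) ≤ hi (topBlock π S (π.part x)) := by
  have := topBlock_le π S (π.part x)
  have := lo_le (mem_part_self π x)
  have := le_hi (mem_part_self π x)
  omega

lemma mergeStep_topBlock (hB : B ∈ π.parts) : mergeStep π S (topBlock π S B) = topBlock π S B :=
  isFixedPt_iterate_of_lt lo (fun _ h => (mergeStep_lt_of_ne h).1) (lo_lt hB)

lemma topBlock_eq_self (h : mergeStep π S B = B) : topBlock π S B = B :=
  Function.iterate_fixed h m

lemma topBlock_topBlock (hB : B ∈ π.parts) : topBlock π S (topBlock π S B) = topBlock π S B :=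
  topBlock_eq_self (mergeStep_topBlock hB)

lemma topBlock_mergeStep (hB : B ∈ π.parts) :
    topBlock π S (mergeStep π S B) = topBlock π S B := by
  rw [topBlock, ← Function.iterate_succ_apply, Function.iterate_succ_apply']
  exact mergeStep_topBlock hB

lemma topBlock_part_eq_of_mem (hB : B ∈ π.parts) {x : Fin m} (hx : x ∈ topBlock π S B) :
    topBlock π S (π.part x) = topBlock π S B := by
  rw [π.part_eq_of_mem (topBlock_mem_parts hB) hx, topBlock_topBlock hB]

lemma IsNC.le_mergeStep (hπ : IsNC π) (hT : T ∈ π.parts) (hTfix : mergeStep π S T = T)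
    (hB : B ∈ π.parts) (h : lo T ≤ lo B ∧ hi B ≤ hi T) :
    lo T ≤ lo (mergeStep π S B) ∧ hi (mergeStep π S B) ≤ hi T := by
  by_cases hBT : B = T
  · rw [hBT, hTfix]
    exact ⟨le_rfl, le_rfl⟩
  have hTB : T ∈ embracers π B := mem_embracers.2 ⟨hT, strictlyEmbraces_of_le hT hB hBT h⟩
  unfold mergeStep
  split_ifs
  · have := lo_le_lo_parent hTB
    have := hπ.hi_parent_le (π.nonempty_of_mem_parts hB) hTB
    omega
  · exact h

lemma IsNC.le_topBlock (hπ : IsNC π) (hT : T ∈ π.parts) (hTfix : mergeStep π S T = T)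
    (hB : B ∈ π.parts) (h : lo T ≤ lo B ∧ hi B ≤ hi T) :
    lo T ≤ lo (topBlock π S B) ∧ hi (topBlock π S B) ≤ hi T :=
  (Function.Iterate.rec (fun X => X ∈ π.parts ∧ lo T ≤ lo X ∧ hi X ≤ hi T) ⟨hB, h⟩
    (fun _ hX => ⟨mergeStep_mem_parts hX.1, hπ.le_mergeStep hT hTfix hX.1 hX.2⟩) m).2

lemma IsNC.le_topBlock_part (hπ : IsNC π) (hT : T ∈ π.parts) (hTfix : mergeStep π S T = T)
    {x : Fin m} (h₁ : lo T ≤ x) (h₂ : x ≤ hi T) :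
    lo T ≤ lo (topBlock π S (π.part x)) ∧ hi (topBlock π S (π.part x)) ≤ hi T := by
  refine hπ.le_topBlock hT hTfix (part_mem_parts π x) ?_
  by_cases hxT : x ∈ T
  · rw [π.part_eq_of_mem hT hxT]
    exact ⟨le_rfl, le_rfl⟩
  obtain ⟨t₁, ht₁, ht₁T⟩ := exists_val_eq_lo (π.nonempty_of_mem_parts hT)
  obtain ⟨t₂, ht₂, ht₂T⟩ := exists_val_eq_hi (π.nonempty_of_mem_parts hT)
  have hne₁ : x ≠ t₁ := fun e => hxT (e ▸ ht₁)
  have hne₂ : x ≠ t₂ := fun e => hxT (e ▸ ht₂)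
  have hpart : π.part x ≠ T := fun e => hxT (e ▸ mem_part_self π x)
  have := (hπ.strictlyEmbraces_of_mem (part_mem_parts π x) hT hpart (mem_part_self π x)
    (by omega) (by omega)).lt
  omega

end Merging

section MergedPartition

variable {π : FP m} {S : Finset (Finset (Fin m))}

noncomputable def merge (π : FP m) (S : Finset (Finset (Fin m))) : FP m :=
  Finpartition.ofSetoid (Setoid.ker fun x => topBlock π S (π.part x))

lemma mem_part_merge {a b : Fin m} :
    b ∈ (merge π S).part a ↔ topBlock π S (π.part a) = topBlock π S (π.part b) :=
  Finpartition.mem_part_ofSetoid_iff_rel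

lemma exists_subset_merge_iff {A B : Finset (Fin m)} (hA : A ∈ π.parts) (hB : B ∈ π.parts) :
    (∃ C ∈ (merge π S).parts, A ⊆ C ∧ B ⊆ C) ↔ topBlock π S A = topBlock π S B := by
  obtain ⟨a, ha⟩ := π.nonempty_of_mem_parts hA
  obtain ⟨b, hb⟩ := π.nonempty_of_mem_parts hB
  constructor
  · rintro ⟨C, hC, hAC, hBC⟩
    have hab := (merge π S).part_eq_of_mem hC (hAC ha) ▸ hBC hb
    rwa [mem_part_merge, π.part_eq_of_mem hA ha, π.part_eq_of_mem hB hb] at hab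
  · intro h
    refine ⟨(merge π S).part a, part_mem_parts _ a, fun x hx => ?_, fun x hx => ?_⟩ <;>
      rw [mem_part_merge, π.part_eq_of_mem hA ha]
    · rw [π.part_eq_of_mem hA hx]
    · rw [π.part_eq_of_mem hB hx, h]

lemma isNC_merge (hπ : IsNC π) (S : Finset (Finset (Fin m))) : IsNC (merge π S) := by
  intro i j k l hij hjk hkl hik hjl
  rw [sameBlock_iff_mem_part, mem_part_merge] at hik hjl ⊢
  have hT₁ := topBlock_mem_parts (S := S) (part_mem_parts π i)
  have hT₂ := topBlock_mem_parts (S := S) (part_mem_parts π j)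
  have hi := topBlock_part_le π S i
  have hj := topBlock_part_le π S j
  have hk := topBlock_part_le π S k
  have hl := topBlock_part_le π S l
  rw [← hik] at hk
  rw [← hjl] at hl
  have h₁₂ := hπ.le_topBlock_part hT₁ (mergeStep_topBlock (part_mem_parts π i))
    (x := j) (by omega) (by omega)
  have h₂₁ := hπ.le_topBlock_part hT₂ (mergeStep_topBlock (part_mem_parts π j))
    (x := k) (by omega) (by omega)
  rw [← hik] at h₂₁
  exact eq_of_lo_eq hT₁ hT₂ (by omega)

lemma ll_merge (π : FP m) (S : Finset (Finset (Fin m))) : Ll π (merge π S) := by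
  refine ⟨fun B hB => ?_, fun C hC => ?_⟩
  · obtain ⟨b, hb⟩ := π.nonempty_of_mem_parts hB
    exact ⟨_, part_mem_parts _ b, fun x hx => mem_part_merge.2 (by
      rw [π.part_eq_of_mem hB hb, π.part_eq_of_mem hB hx])⟩
  obtain ⟨a, ha⟩ := (merge π S).nonempty_of_mem_parts hC
  have hCa := (merge π S).part_eq_of_mem hC ha
  obtain ⟨T, hTa⟩ : ∃ T, topBlock π S (π.part a) = T := ⟨_, rfl⟩
  have hT : T ∈ π.parts := hTa ▸ topBlock_mem_parts (part_mem_parts π a)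
  have hTC : T ⊆ C := fun t ht => hCa ▸ mem_part_merge.2
    (topBlock_part_eq_of_mem (part_mem_parts π a) (hTa ▸ ht)).symm
  have hCT : ∀ y ∈ C, lo T ≤ y ∧ (y : ℕ) ≤ hi T := fun y hy => by
    rw [← hCa, mem_part_merge, hTa] at hy
    rw [hy]
    exact topBlock_part_le π S y
  obtain ⟨x, hx, hxT⟩ := exists_val_eq_lo (π.nonempty_of_mem_parts hT)
  obtain ⟨y, hy, hyT⟩ := exists_val_eq_hi (π.nonempty_of_mem_parts hT)
  refine ⟨T, hT, x, y, ⟨hTC hx, fun z hz => ?_⟩, ⟨hTC hy, fun z hz => ?_⟩, hx, hy⟩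
  · have := hCT z hz; omega
  · have := hCT z hz; omega

end MergedPartition

section JoinedBlocks

variable {π ρ : FP m} {S : Finset (Finset (Fin m))} {B C R X : Finset (Fin m)}

noncomputable def joinedBlocks (π ρ : FP m) : Finset (Finset (Fin m)) :=
  (innerBlocks π).filter fun A => ∃ C ∈ ρ.parts, A ⊆ C ∧ parent π A ⊆ C

lemma joinedBlocks_merge (hS : S ⊆ innerBlocks π) : joinedBlocks π (merge π S) = S := by
  ext A
  rw [joinedBlocks, Finset.mem_filter]
  constructor
  · rintro ⟨hA, hjoin⟩
    have hAparts := (mem_innerBlocks.1 hA).1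
    rw [exists_subset_merge_iff hAparts (parent_mem_parts hAparts)] at hjoin
    by_contra hAS
    rw [topBlock_eq_self (if_neg hAS)] at hjoin
    have := topBlock_le π S (parent π A)
    have := (strictlyEmbraces_parent hA).lt
    have := congrArg lo hjoin
    omega
  · intro hAS
    have hAparts := (mem_innerBlocks.1 (hS hAS)).1
    refine ⟨hS hAS, (exists_subset_merge_iff hAparts (parent_mem_parts hAparts)).2 ?_⟩
    rw [← topBlock_mergeStep hAparts, mergeStep, if_pos hAS]

lemma topBlock_subset (hB : B ∈ π.parts) (hC : C ∈ ρ.parts) (hBC : B ⊆ C) :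
    topBlock π (joinedBlocks π ρ) B ⊆ C := by
  refine (Function.Iterate.rec (fun X => X ∈ π.parts ∧ X ⊆ C) ⟨hB, hBC⟩ ?_ m).2
  rintro X ⟨hX, hXC⟩
  refine ⟨mergeStep_mem_parts hX, ?_⟩
  unfold mergeStep
  split_ifs with hXj
  · obtain ⟨C', hC', hXC', hPC'⟩ := (Finset.mem_filter.1 hXj).2
    obtain ⟨x, hx⟩ := π.nonempty_of_mem_parts hX
    rwa [ρ.eq_of_mem_parts hC hC' (hXC hx) (hXC' hx)]
  · exact hXC

lemma IsNC.mem_joinedBlocks (hρ : IsNC ρ) (hπρ : Refines π ρ)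
    (hC : C ∈ ρ.parts) (hR : R ∈ π.parts) (hRC : R ⊆ C) (hX : X ∈ π.parts) (hXC : X ⊆ C)
    (hRX : StrictlyEmbraces R X) : X ∈ joinedBlocks π ρ := by
  have hRemb : R ∈ embracers π X := mem_embracers.2 ⟨hR, hRX⟩
  have hXin : X ∈ innerBlocks π := mem_innerBlocks.2 ⟨hX, R, hRemb⟩
  have hP := parent_mem_parts hX
  obtain ⟨C', hC', hPC'⟩ := hπρ _ hP
  refine Finset.mem_filter.2 ⟨hXin, C, hC, hXC, ?_⟩
  suffices hCC' : C = C' by rwa [hCC']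
  obtain ⟨p₁, hp₁, hp₁P⟩ := exists_val_eq_lo (π.nonempty_of_mem_parts hP)
  by_cases hPR : parent π X = R
  · exact ρ.eq_of_mem_parts hC hC' (hRC (hPR ▸ hp₁)) (hPC' hp₁)
  obtain ⟨p₂, hp₂, hp₂P⟩ := exists_val_eq_hi (π.nonempty_of_mem_parts hP)
  obtain ⟨r, hr, hrR⟩ := exists_val_eq_lo (π.nonempty_of_mem_parts hR)
  obtain ⟨x, hx, hxX⟩ := exists_val_eq_lo (π.nonempty_of_mem_parts hX)
  have := lo_le_lo_parent hRemb
  have := (strictlyEmbraces_parent hXin).lt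
  have := le_hi hx
  have hne : lo R ≠ lo (parent π X) := fun e => hPR (eq_of_lo_eq hR hP e).symm
  exact hρ.eq_of_lt hC hC' (hRC hr) (hXC hx) (hPC' hp₁) (hPC' hp₂)
    (by omega) (by omega) (by omega)

lemma IsNC.eq_of_mergeStep_eq (hρ : IsNC ρ) (hπρ : Ll π ρ) (hC : C ∈ ρ.parts)
    (hX : X ∈ π.parts) (hXC : X ⊆ C) (hXfix : mergeStep π (joinedBlocks π ρ) X = X)
    (hB : B ∈ π.parts) (hBC : B ⊆ C) (hBfix : mergeStep π (joinedBlocks π ρ) B = B) :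
    X = B := by
  obtain ⟨R, hR, x, y, hx, hy, hxR, hyR⟩ := hπρ.2 C hC
  obtain ⟨C', hC', hRC'⟩ := hπρ.1 R hR
  have hRC : R ⊆ C := ρ.eq_of_mem_parts hC' hC (hRC' hxR) hx.1 ▸ hRC'
  suffices h : ∀ Y ∈ π.parts, Y ⊆ C → mergeStep π (joinedBlocks π ρ) Y = Y → Y = R from
    (h X hX hXC hXfix).trans (h B hB hBC hBfix).symm
  intro Y hY hYC hYfix
  by_contra hYR
  obtain ⟨y₁, hy₁, hy₁Y⟩ := exists_val_eq_lo (π.nonempty_of_mem_parts hY)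
  obtain ⟨y₂, hy₂, hy₂Y⟩ := exists_val_eq_hi (π.nonempty_of_mem_parts hY)
  have := hx.2 y₁ (hYC hy₁)
  have := hy.2 y₂ (hYC hy₂)
  have := lo_le hxR
  have := le_hi hyR
  have hRY := strictlyEmbraces_of_le hR hY hYR (by omega)
  have hYj := hρ.mem_joinedBlocks hπρ.1 hC hR hRC hY hYC hRY
  rw [mergeStep, if_pos hYj] at hYfix
  have := (strictlyEmbraces_parent (Finset.mem_filter.1 hYj).1).lt
  rw [hYfix] at this
  omega

lemma IsNC.merge_joinedBlocks (hρ : IsNC ρ) (hπρ : Ll π ρ) :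
    merge π (joinedBlocks π ρ) = ρ := by
  have hsub : ∀ x, π.part x ⊆ ρ.part x := fun x => by
    obtain ⟨C, hC, hxC⟩ := hπρ.1 _ (part_mem_parts π x)
    rwa [← ρ.part_eq_of_mem hC (hxC (mem_part_self π x))] at hxC
  have htop : ∀ x, topBlock π (joinedBlocks π ρ) (π.part x) ⊆ ρ.part x := fun x =>
    topBlock_subset (part_mem_parts π x) (part_mem_parts ρ x) (hsub x)
  refine eq_of_mem_part_iff fun a b => ?_
  rw [mem_part_merge]
  constructor
  · intro h
    obtain ⟨t, ht⟩ := π.nonempty_of_mem_parts (topBlock_mem_parts (S := joinedBlocks π ρ)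
      (part_mem_parts π a))
    have hb := ρ.eq_of_mem_parts (part_mem_parts ρ a) (part_mem_parts ρ b) (htop a ht)
      (htop b (h ▸ ht))
    exact hb ▸ mem_part_self ρ b
  · intro hb
    have hab : ρ.part b = ρ.part a := ρ.part_eq_of_mem (part_mem_parts ρ a) hb
    exact hρ.eq_of_mergeStep_eq hπρ (part_mem_parts ρ a)
      (topBlock_mem_parts (part_mem_parts π a)) (htop a) (mergeStep_topBlock (part_mem_parts π a))
      (topBlock_mem_parts (part_mem_parts π b)) (hab ▸ htop b)
      (mergeStep_topBlock (part_mem_parts π b))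

end JoinedBlocks

theorem statement2_general (n : ℕ) (π : FP n) (hπ : IsNC π) :
    {ρ : FP n | IsNC ρ ∧ Ll π ρ}.ncard = 2 ^ (π.parts.card - numOuter π) := by
  have hinv : Set.LeftInvOn (joinedBlocks π) (merge π) ↑(innerBlocks π).powerset :=
    fun S hS => joinedBlocks_merge (Finset.mem_powerset.1 hS)
  have himage : {ρ : FP n | IsNC ρ ∧ Ll π ρ} = merge π '' ↑(innerBlocks π).powerset := by
    ext ρ
    constructor
    · rintro ⟨hρ, hπρ⟩
      exact ⟨joinedBlocks π ρ, Finset.mem_powerset.2 (filter_subset _ _),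
        hρ.merge_joinedBlocks hπρ⟩
    · rintro ⟨S, -, rfl⟩
      exact ⟨isNC_merge hπ S, ll_merge π S⟩
  rw [himage, hinv.injOn.ncard_image, Set.ncard_coe_finset, card_powerset,
    card_innerBlocks]

/-- Remark 2.14: for `π ∈ NC(n)`, the number of `ρ ∈ NC(n)` with
`ρ ≫ π` is `2 ^ (|π| - |π|_out)`. -/
theorem statement2 (n : ℕ) (hn : 0 < n) (π : FP n) (hπ : IsNC π) :
    {ρ : FP n | IsNC ρ ∧ Ll π ρ}.ncard = 2 ^ (π.parts.card - numOuter π) :=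
  statement2_general n π hπ
end BBP
end

section
/- Let k be a positive integer, let (μ_N)_{N=1}^∞ be distributions in D_alg(k), and let p₁ < p₂ < ⋯ < p_N < ⋯ be positive integers. (1) If there exists μ ∈ D_alg(k) such that the p_N-fold Boolean convolutions μ_N ⊎ ⋯ ⊎ μ_N converge in moments to μ, then the p_N-fold free additive convolutions μ_N ⊞ ⋯ ⊞ μ_N converge in moments to B(μ). (2) If there exists ν ∈ D_alg(k) such that the p_N-fold free additive convolutions μ_N ⊞ ⋯ ⊞ μ_N converge in moments to ν, then the p_N-fold Boolean convolutions μ_N ⊎ ⋯ ⊎ μ_N converge in moments to B⁻¹(ν). -/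
open Finset

attribute [local instance] Classical.propDecidable

open scoped ComplexOrder

namespace BBP

/-!
The η-series and the R-transform are both obtained from the moments by a triangular recursion
`f_n = M_n - (sum over the proper partitions of products of lower coefficients of f)`, so both
depend continuously on the moments, and conversely. Write `η_N, R_N` for the η-series and the
R-transform of `μ_N`, so that `η_{b_N} = p_N η_N` and `R_{f_N} = p_N R_N`. Multiplying
`R_N = η_N + Σ_{interval π ≠ 1} Cf_{;π}(η_N) - Σ_{non-crossing π ≠ 1} Cf_{;π}(R_N)` by `p_N`,
a partition with `b ≥ 2` blocks contributes `p_N^{1-b}` times a product of coefficients of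
`p_N η_N` or `p_N R_N` of lower order. By induction on the length, `p_N η_N` and `p_N R_N`
therefore have the same coefficientwise limit, so the moments of `b_N` converge if and only if
those of `f_N` do, with limits related by `𝔹`.
-/

open Filter Topology

section Development

variable {k : ℕ}

section Partitions

lemma fullPart_parts (n : ℕ) : (fullPart n).parts = {univ} := by
  simp [fullPart]

lemma eq_fullPart_of_univ_mem {n : ℕ} {π : FP (n+1)} (h : univ ∈ π.parts) :
    π = fullPart n := by
  ext B
  rw [fullPart_parts, mem_singleton]
  refine ⟨fun hB => ?_, fun hB => hB ▸ h⟩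
  obtain ⟨b, hb⟩ := π.nonempty_of_mem_parts hB
  exact π.eq_of_mem_parts hB h hb (mem_univ b)

variable {n : ℕ} {π : FP (n+1)}

lemma card_sub_one_lt_of_mem_parts (hπ : π ≠ fullPart n) {B : Finset (Fin (n+1))}
    (hB : B ∈ π.parts) : #B - 1 < n := by
  have hne : B ≠ univ := fun h => hπ (eq_fullPart_of_univ_mem (h ▸ hB))
  have hlt := (card_lt_iff_ne_univ B).2 hne
  have hpos := card_pos.2 (π.nonempty_of_mem_parts hB)
  simp only [Fintype.card_fin] at hlt
  omega

lemma one_lt_card_parts (hπ : π ≠ fullPart n) : 1 < #π.parts := by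
  obtain ⟨B, hB⟩ := π.parts_nonempty univ_nonempty.ne_empty
  obtain ⟨x, hx⟩ : ∃ x, x ∉ B := by
    by_contra! h
    exact hπ (eq_fullPart_of_univ_mem (eq_univ_iff_forall.2 h ▸ hB))
  obtain ⟨B', hB', hxB'⟩ := π.exists_mem (mem_univ x)
  exact one_lt_card.2 ⟨B, hB, B', hB', fun h => hx (h ▸ hxB')⟩

lemma isIntervalPartition_fullPart (n : ℕ) : IsIntervalPartition (fullPart n) := by
  intro B hB _ _ _ _ y _ _
  rw [fullPart_parts, mem_singleton] at hB
  exact hB ▸ mem_univ y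

lemma isNC_fullPart (n : ℕ) : IsNC (fullPart n) :=
  fun i j _ _ _ _ _ _ _ => ⟨univ, by simp [fullPart_parts], mem_univ i, mem_univ j⟩

end Partitions

section Coefficients

lemma ncSeries_apply_congr (f : NCSeries k) {a b : ℕ} (h : a = b) {u : Fin (a+1) → Fin k}
    {v : Fin (b+1) → Fin k} (huv : ∀ j, u j = v (Fin.cast (by omega) j)) :
    f a u = f b v := by
  subst h
  exact congrArg _ (funext huv)

variable {n : ℕ} {w : Fin (n+1) → Fin k} {π : FP (n+1)}

lemma partCoeff_univ (f : NCSeries k) (w : Fin (n+1) → Fin k) :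
    partCoeff f w univ = f n w := by
  rw [partCoeff, dif_pos univ_nonempty]
  refine ncSeries_apply_congr f (by simp) fun j => congrArg w ?_
  rw [coe_orderIsoOfFin_apply]
  exact congrFun (orderEmbOfFin_unique _ (fun _ => mem_univ _) (Fin.cast_strictMono _)) j |>.symm

lemma genCoeff_fullPart (f : NCSeries k) (w : Fin (n+1) → Fin k) :
    genCoeff f w (fullPart n) = f n w := by
  rw [genCoeff, fullPart_parts, prod_singleton, partCoeff_univ]

lemma genCoeff_smul (c : ℂ) (f : NCSeries k) :
    genCoeff (c • f) w π = c ^ #π.parts * genCoeff f w π := by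
  rw [genCoeff, genCoeff, ← prod_const, ← prod_mul_distrib]
  refine prod_congr rfl fun B hB => ?_
  simp only [partCoeff, dif_pos (π.nonempty_of_mem_parts hB)]
  rfl

/-- Also true for `c = 0`, as `0⁻¹ = 0`. -/
lemma mul_genCoeff (c : ℂ) (f : NCSeries k) :
    c * genCoeff f w π = c⁻¹ ^ (#π.parts - 1) * genCoeff (c • f) w π := by
  obtain ⟨j, hj⟩ : ∃ j, #π.parts = j + 1 :=
    Nat.exists_eq_add_one.2 (card_pos.2 (π.parts_nonempty univ_nonempty.ne_empty))
  rw [genCoeff_smul, hj, Nat.add_sub_cancel, ← mul_assoc]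
  congr 1
  rcases eq_or_ne c 0 with rfl | hc
  · simp
  · rw [pow_succ, ← mul_assoc, ← mul_pow, inv_mul_cancel₀ hc, one_pow, one_mul]

lemma genCoeff_congr {f f' : NCSeries k} (h : ∀ B ∈ π.parts, f (#B - 1) = f' (#B - 1)) :
    genCoeff f w π = genCoeff f' w π :=
  prod_congr rfl fun B hB => by simp only [partCoeff, h B hB]

lemma tendsto_genCoeff {fseq : ℕ → NCSeries k} {f : NCSeries k}
    (h : ∀ B ∈ π.parts, ∀ v, Tendsto (fun N => fseq N (#B - 1) v) atTop (𝓝 (f (#B - 1) v))) :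
    Tendsto (fun N => genCoeff (fseq N) w π) atTop (𝓝 (genCoeff f w π)) := by
  refine tendsto_finsetProd _ fun B hB => ?_
  simp only [partCoeff, dif_pos (π.nonempty_of_mem_parts hB)]
  exact h B hB _

end Coefficients

section PartitionSums

variable (Q : ∀ n, FP (n+1) → Prop)

/-- `Q` is `IsIntervalPartition` for η-series and `IsNC` for R-transforms. -/
noncomputable def partitionSum (f : NCSeries k) : NCSeries k :=
  fun n w => ∑ π : FP (n+1), if Q n π then genCoeff f w π else 0

noncomputable def properPartitionSum (f : NCSeries k) : NCSeries k :=
  fun n w => ∑ π with Q n π ∧ π ≠ fullPart n, genCoeff f w π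

variable {Q} {n : ℕ} {w : Fin (n+1) → Fin k}

lemma partitionSum_eq_add (hQ : Q n (fullPart n)) (f : NCSeries k) :
    partitionSum Q f n w = f n w + properPartitionSum Q f n w := by
  have hfilter : univ.filter (Q n) =
      insert (fullPart n) (univ.filter fun π => Q n π ∧ π ≠ fullPart n) := by
    ext π
    by_cases h : π = fullPart n <;> simp [h, hQ]
  rw [partitionSum, properPartitionSum, ← sum_filter, hfilter, sum_insert (by simp),
    genCoeff_fullPart]

lemma properPartitionSum_congr {f f' : NCSeries k} (h : ∀ m < n, f m = f' m) :
    properPartitionSum Q f n w = properPartitionSum Q f' n w := by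
  refine sum_congr rfl fun π hπ => genCoeff_congr fun B hB => ?_
  exact h _ (card_sub_one_lt_of_mem_parts (mem_filter.1 hπ).2.2 hB)

lemma tendsto_properPartitionSum {fseq : ℕ → NCSeries k} {f : NCSeries k}
    (h : ∀ m < n, ∀ v, Tendsto (fun N => fseq N m v) atTop (𝓝 (f m v))) :
    Tendsto (fun N => properPartitionSum Q (fseq N) n w) atTop
      (𝓝 (properPartitionSum Q f n w)) := by
  refine tendsto_finsetSum _ fun π hπ => tendsto_genCoeff fun B hB => ?_
  exact h _ (card_sub_one_lt_of_mem_parts (mem_filter.1 hπ).2.2 hB)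

lemma tendsto_mul_properPartitionSum_zero {c : ℕ → ℂ}
    (hc : Tendsto (fun N => (c N)⁻¹) atTop (𝓝 0))
    {fseq : ℕ → NCSeries k} {f : NCSeries k}
    (h : ∀ m < n, ∀ v, Tendsto (fun N => c N * fseq N m v) atTop (𝓝 (f m v))) :
    Tendsto (fun N => c N * properPartitionSum Q (fseq N) n w) atTop (𝓝 0) := by
  have hterm : ∀ π ∈ univ.filter (fun π => Q n π ∧ π ≠ fullPart n),
      Tendsto (fun N => (c N)⁻¹ ^ (#π.parts - 1) * genCoeff (c N • fseq N) w π) atTop (𝓝 0) := by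
    intro π hπ
    have hπ := (mem_filter.1 hπ).2.2
    have hpow : Tendsto (fun N => (c N)⁻¹ ^ (#π.parts - 1)) atTop (𝓝 0) := by
      simpa [zero_pow (by have := one_lt_card_parts hπ; omega : #π.parts - 1 ≠ 0)]
        using hc.pow (#π.parts - 1)
    have hcoeff : Tendsto (fun N => genCoeff (c N • fseq N) w π) atTop (𝓝 (genCoeff f w π)) :=
      tendsto_genCoeff fun B hB => h _ (card_sub_one_lt_of_mem_parts hπ hB)
    simpa using hpow.mul hcoeff
  have hsum := tendsto_finsetSum _ hterm
  rw [sum_const_zero] at hsum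
  refine hsum.congr fun N => ?_
  rw [properPartitionSum, mul_sum]
  exact sum_congr rfl fun π _ => (mul_genCoeff _ _).symm

end PartitionSums

section Cumulants

variable (Q : ∀ n, FP (n+1) → Prop)

/-- The inverse of `partitionSum Q`, by recursion on the length of words. -/
noncomputable def cumulants (M : NCSeries k) : NCSeries k
  | n => fun w =>
    M n w - properPartitionSum Q (fun m v => if m < n then cumulants M m v else 0) n w

lemma cumulants_eq (M : NCSeries k) (n : ℕ) (w : Fin (n+1) → Fin k) :
    cumulants Q M n w = M n w - properPartitionSum Q (cumulants Q M) n w := by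
  rw [cumulants]
  exact congrArg _ (properPartitionSum_congr fun m hm => funext fun v => if_pos hm)

variable {Q}

lemma ConvCoeffwise.cumulants {Mseq : ℕ → NCSeries k} {M : NCSeries k}
    (h : ConvCoeffwise Mseq M) :
    ConvCoeffwise (fun N => cumulants Q (Mseq N)) (cumulants Q M) := by
  intro n
  induction n using Nat.strong_induction_on with
  | _ n ih =>
    intro w
    simp only [cumulants_eq]
    exact (h n w).sub (tendsto_properPartitionSum ih)

variable (hQ : ∀ n, Q n (fullPart n))
include hQ

lemma partitionSum_cumulants (M : NCSeries k) : partitionSum Q (cumulants Q M) = M := by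
  funext n w
  rw [partitionSum_eq_add (hQ n), cumulants_eq]
  ring

lemma cumulants_partitionSum (f : NCSeries k) : cumulants Q (partitionSum Q f) = f := by
  funext n
  induction n using Nat.strong_induction_on with
  | _ n ih =>
    funext w
    rw [cumulants_eq, partitionSum_eq_add (hQ n), properPartitionSum_congr fun m hm => ih m hm]
    ring

lemma ConvCoeffwise.partitionSum {fseq : ℕ → NCSeries k} {f : NCSeries k}
    (h : ConvCoeffwise fseq f) :
    ConvCoeffwise (fun N => partitionSum Q (fseq N)) (partitionSum Q f) := by
  intro n w
  simp only [partitionSum_eq_add (hQ n)]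
  exact (h n w).add (tendsto_properPartitionSum fun m _ => h m)

end Cumulants

section Rescaling

variable {Q Q' : ∀ n, FP (n+1) → Prop}

theorem convCoeffwise_smul_of_partitionSum_eq (hQ : ∀ n, Q n (fullPart n))
    (hQ' : ∀ n, Q' n (fullPart n)) {c : ℕ → ℂ} (hc : Tendsto (fun N => (c N)⁻¹) atTop (𝓝 0))
    {g f : ℕ → NCSeries k} (hgf : ∀ N, partitionSum Q (g N) = partitionSum Q' (f N))
    {h : NCSeries k} (hg : ConvCoeffwise (fun N => c N • g N) h) :
    ConvCoeffwise (fun N => c N • f N) h := by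
  intro n
  induction n using Nat.strong_induction_on with
  | _ n ih =>
    intro w
    have hf : ∀ N, c N * g N n w + c N * properPartitionSum Q (g N) n w -
        c N * properPartitionSum Q' (f N) n w = c N * f N n w := by
      intro N
      have := congrFun₂ (hgf N) n w
      rw [partitionSum_eq_add (hQ n), partitionSum_eq_add (hQ' n)] at this
      linear_combination c N * this
    have hlim : Tendsto (fun N => c N * g N n w + c N * properPartitionSum Q (g N) n w -
        c N * properPartitionSum Q' (f N) n w) atTop (𝓝 (h n w + 0 - 0)) :=
      ((hg n w).add (tendsto_mul_properPartitionSum_zero hc fun m _ => hg m)).sub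
        (tendsto_mul_properPartitionSum_zero hc ih)
    rw [add_zero, sub_zero] at hlim
    exact hlim.congr hf

end Rescaling

section Distributions

lemma basisFreeMonoid_apply (R X : Type*) [CommSemiring R] (l : FreeMonoid X) :
    FreeAlgebra.basisFreeMonoid R X l = FreeMonoid.lift (FreeAlgebra.ι R) l := by
  simp [FreeAlgebra.basisFreeMonoid, FreeAlgebra.equivMonoidAlgebraFreeMonoid]

lemma momentSeries_eq_apply_basisFreeMonoid (μ : Dist k) {n : ℕ} (w : Fin (n+1) → Fin k) :
    momentSeries μ n w = μ (FreeAlgebra.basisFreeMonoid ℂ (Fin k) (.ofList (List.ofFn w))) := by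
  rw [basisFreeMonoid_apply, FreeMonoid.lift_ofList, List.map_ofFn]
  rfl

noncomputable def ofMoments (M : NCSeries k) : Dist k :=
  (FreeAlgebra.basisFreeMonoid ℂ (Fin k)).constr ℂ fun l =>
    match FreeMonoid.toList l with
    | [] => 1
    | a :: t => M t.length (a :: t).get

lemma isDalg_ofMoments (M : NCSeries k) : IsDalg (ofMoments M) := by
  have h1 : (1 : FreeAlgebra ℂ (Fin k)) = FreeAlgebra.basisFreeMonoid ℂ (Fin k) 1 := by
    simp [basisFreeMonoid_apply]
  rw [IsDalg, h1, ofMoments, Module.Basis.constr_basis]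
  rfl

lemma momentSeries_ofMoments (M : NCSeries k) : momentSeries (ofMoments M) = M := by
  funext n w
  rw [momentSeries_eq_apply_basisFreeMonoid, ofMoments, Module.Basis.constr_basis,
    FreeMonoid.toList_ofList, List.ofFn_succ]
  refine ncSeries_apply_congr M List.length_ofFn fun j => ?_
  cases j using Fin.cases <;> simp [Fin.succ]

lemma ConvInMoments.convCoeffwise {μseq : ℕ → Dist k} {μ : Dist k} (h : ConvInMoments μseq μ) :
    ConvCoeffwise (fun N => momentSeries (μseq N)) (momentSeries μ) :=
  fun _ _ => h _

lemma convInMoments_of_convCoeffwise {μseq : ℕ → Dist k} {μ : Dist k}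
    (hseq : ∀ N, IsDalg (μseq N)) (hμ : IsDalg μ)
    (h : ConvCoeffwise (fun N => momentSeries (μseq N)) (momentSeries μ)) :
    ConvInMoments μseq μ := by
  have hword : ∀ l, Tendsto (fun N => μseq N (FreeAlgebra.basisFreeMonoid ℂ (Fin k) l)) atTop
      (𝓝 (μ (FreeAlgebra.basisFreeMonoid ℂ (Fin k) l))) := by
    intro l
    cases hl : FreeMonoid.toList l with
    | nil =>
      have hl' : FreeAlgebra.basisFreeMonoid ℂ (Fin k) l = 1 := by
        simp [basisFreeMonoid_apply, FreeMonoid.lift_apply, hl]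
      rw [hl', show μ 1 = 1 from hμ]
      exact tendsto_const_nhds.congr fun N => (hseq N).symm
    | cons a t =>
      have hl' : l = .ofList (List.ofFn (a :: t).get) := by
        rw [List.ofFn_get, ← hl]
        rfl
      simp only [hl', ← momentSeries_eq_apply_basisFreeMonoid]
      exact h _ _
  intro P
  have hP : P ∈ Submodule.span ℂ (Set.range (FreeAlgebra.basisFreeMonoid ℂ (Fin k))) := by
    simp [Module.Basis.span_eq]
  induction hP using Submodule.span_induction with
  | mem x hx =>
    obtain ⟨l, rfl⟩ := hx
    exact hword l
  | zero => simp
  | add x y _ _ hx hy => simpa using hx.add hy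
  | smul a x _ hx => simpa using hx.const_mul a

end Distributions

section Transfer

lemma isEtaSeries_iff {μ : Dist k} {g : NCSeries k} :
    IsEtaSeries μ g ↔ momentSeries μ = partitionSum (fun _ => IsIntervalPartition) g :=
  ⟨fun h => funext₂ h, fun h => congrFun₂ h⟩

lemma isRTransform_iff {μ : Dist k} {f : NCSeries k} :
    IsRTransform μ f ↔ momentSeries μ = partitionSum (fun _ => IsNC) f :=
  ⟨fun h => funext₂ h, fun h => congrFun₂ h⟩

theorem exists_limit_of_convInMoments {Q Q' : ∀ n, FP (n+1) → Prop}
    (hQ : ∀ n, Q n (fullPart n)) (hQ' : ∀ n, Q' n (fullPart n))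
    {p : ℕ → ℕ} (hp : Tendsto p atTop atTop) {bseq fseq : ℕ → Dist k}
    (hfseq : ∀ N, IsDalg (fseq N)) {g f : ℕ → NCSeries k}
    (hgf : ∀ N, partitionSum Q (g N) = partitionSum Q' (f N))
    (hb : ∀ N, momentSeries (bseq N) = partitionSum Q ((p N : ℂ) • g N))
    (hf : ∀ N, momentSeries (fseq N) = partitionSum Q' ((p N : ℂ) • f N))
    {μ : Dist k} (hμ : ConvInMoments bseq μ) :
    ∃ η : NCSeries k, ∃ ν : Dist k, IsDalg ν ∧ momentSeries μ = partitionSum Q η ∧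
      momentSeries ν = partitionSum Q' η ∧ ConvInMoments fseq ν := by
  set η := cumulants Q (momentSeries μ)
  have hbη : ConvCoeffwise (fun N => (p N : ℂ) • g N) η := by
    simpa only [hb, cumulants_partitionSum hQ] using hμ.convCoeffwise.cumulants (Q := Q)
  have hp' : Tendsto (fun N => ((p N : ℂ))⁻¹) atTop (𝓝 0) := by
    simpa [Function.comp_def] using (tendsto_one_div_atTop_nhds_zero_nat (𝕜 := ℂ)).comp hp
  have hfη := convCoeffwise_smul_of_partitionSum_eq hQ hQ' hp' hgf hbη
  refine ⟨η, ofMoments (partitionSum Q' η), isDalg_ofMoments _,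
    (partitionSum_cumulants hQ _).symm, momentSeries_ofMoments _,
    convInMoments_of_convCoeffwise hfseq (isDalg_ofMoments _) ?_⟩
  simpa only [hf, momentSeries_ofMoments] using hfη.partitionSum hQ'

end Transfer

end Development

theorem statement10_general (k : ℕ) (μseq : ℕ → Dist k)
    (p : ℕ → ℕ) (hpmono : StrictMono p)
    (bseq fseq : ℕ → Dist k)
    (hbalg : ∀ N, IsDalg (bseq N)) (hfalg : ∀ N, IsDalg (fseq N))
    (hb : ∀ N, IsNFoldBool (p N) (μseq N) (bseq N))
    (hf : ∀ N, IsNFoldFree (p N) (μseq N) (fseq N)) :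
    (∀ μ : Dist k, IsDalg μ → ConvInMoments bseq μ →
      ∃ ν : Dist k, IsDalg ν ∧ IsBP μ ν ∧ ConvInMoments fseq ν) ∧
    (∀ ν : Dist k, IsDalg ν → ConvInMoments fseq ν →
      ∃ μ : Dist k, IsDalg μ ∧ IsBP μ ν ∧ ConvInMoments bseq μ) := by
  choose g hμg hbg using hb
  choose f hμf hff using hf
  have hgf N : partitionSum (fun _ => IsIntervalPartition) (g N) =
      partitionSum (fun _ => IsNC) (f N) :=
    (isEtaSeries_iff.1 (hμg N)).symm.trans (isRTransform_iff.1 (hμf N))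
  have hbg N := isEtaSeries_iff.1 (hbg N)
  have hff N := isRTransform_iff.1 (hff N)
  refine ⟨fun μ _ hμ => ?_, fun ν _ hν => ?_⟩
  · obtain ⟨η, ν, hν, hμη, hνη, hconv⟩ := exists_limit_of_convInMoments isIntervalPartition_fullPart
      isNC_fullPart hpmono.tendsto_atTop hfalg hgf hbg hff hμ
    exact ⟨ν, hν, ⟨η, isEtaSeries_iff.2 hμη, isRTransform_iff.2 hνη⟩, hconv⟩
  · obtain ⟨η, μ, hμ, hνη, hμη, hconv⟩ := exists_limit_of_convInMoments isNC_fullPart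
      isIntervalPartition_fullPart hpmono.tendsto_atTop hbalg (fun N => (hgf N).symm) hff hbg hν
    exact ⟨μ, hμ, ⟨η, isEtaSeries_iff.2 hμη, isRTransform_iff.2 hνη⟩, hconv⟩

/-- Lemma 5.5: let `(μ_N)` be in `D_alg(k)` and `p₁ < p₂ < ⋯` be
positive integers; let `b_N = μ_N ⊎ ⋯ ⊎ μ_N` (`p_N` times) and
`f_N = μ_N ⊞ ⋯ ⊞ μ_N` (`p_N` times).
(1) If `b_N → μ ∈ D_alg(k)` in moments then `f_N → 𝔹(μ)` in moments.
(2) If `f_N → ν ∈ D_alg(k)` in moments then `b_N → 𝔹⁻¹(ν)` in moments. -/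
theorem statement10 (k : ℕ) (hk : 0 < k) (μseq : ℕ → Dist k)
    (hμseq : ∀ N, IsDalg (μseq N))
    (p : ℕ → ℕ) (hp : ∀ N, 0 < p N) (hpmono : StrictMono p)
    (bseq fseq : ℕ → Dist k)
    (hbalg : ∀ N, IsDalg (bseq N)) (hfalg : ∀ N, IsDalg (fseq N))
    (hb : ∀ N, IsNFoldBool (p N) (μseq N) (bseq N))
    (hf : ∀ N, IsNFoldFree (p N) (μseq N) (fseq N)) :
    (∀ μ : Dist k, IsDalg μ → ConvInMoments bseq μ →
      ∃ ν : Dist k, IsDalg ν ∧ IsBP μ ν ∧ ConvInMoments fseq ν) ∧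
    (∀ ν : Dist k, IsDalg ν → ConvInMoments fseq ν →
      ∃ μ : Dist k, IsDalg μ ∧ IsBP μ ν ∧ ConvInMoments bseq μ) :=
  statement10_general k μseq p hpmono bseq fseq hbalg hfalg hb hf

end BBP
end
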